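/- Let N be a multiple of 4 and suppose the acquisition index set Λ_P contains 2Λ_{N/2} (every second index in both directions). If for every n ∈ Λ_{N/2} the N_c × 4 matrix G_n with rows (s^{(j)}_{n+(N/4,N/4)}, s^{(j)}_{n+(N/4,-N/4)}, s^{(j)}_{n+(-N/4,N/4)}, s^{(j)}_{n+(-N/4,-N/4)}), j = 0,...,N_c-1, has rank 4, then the Hermitian matrix Σ_{j=0}^{N_c-1}(B^{(j)})*B^{(j)} with B^{(j)} = P F diag(s^{(j)}) is invertible. -/
import Mathlib


open Complex Matrix BigOperators Finset

noncomputable def omegaN (N : ℕ) : ℂ := Complex.exp (-2 * Real.pi * Complex.I / N)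

/-- ω_N raised to an exponent given modulo N. -/
noncomputable def eN (N : ℕ) (x : ZMod N) : ℂ := omegaN N ^ x.val

/-- The centered 2D DFT matrix F = (ω_N^{ν·n}) indexed by (ZMod N)², which
realizes the index set Λ_N = {-N/2,…,N/2-1}² with periodic wrapping. -/
noncomputable def dft2 (N : ℕ) [NeZero N] :
    Matrix (ZMod N × ZMod N) (ZMod N × ZMod N) ℂ :=
  Matrix.of fun ν n => eN N (ν.1 * n.1 + ν.2 * n.2)

/-- Centering map identifying Fin L with {-n,…,n} ⊂ ZMod N (L = 2n+1). -/
def cenM (N L : ℕ) (i : Fin L) : ZMod N := ((i : ℕ) : ZMod N) - (((L - 1) / 2 : ℕ) : ZMod N)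

/-- (W a)_x = Σ_{r ∈ Λ_L} a_r ω_N^{-r·x}, the trigonometric-polynomial model map. -/
noncomputable def Wmap (N L : ℕ) (a : Fin L × Fin L → ℂ) (x : ZMod N × ZMod N) : ℂ :=
  ∑ r : Fin L × Fin L, a r * eN N (-(cenM N L r.1 * x.1 + cenM N L r.2 * x.2))

lemma omegaN_primitive (N : ℕ) [NeZero N] : IsPrimitiveRoot (omegaN N) N := by
  have h := Complex.isPrimitiveRoot_exp N (NeZero.ne N)
  have : omegaN N = (Complex.exp (2 * Real.pi * Complex.I / N))⁻¹ := by
    rw [omegaN, ← Complex.exp_neg]; ring_nf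
  rw [this]
  exact h.inv

lemma omegaN_pow_N (N : ℕ) [NeZero N] : omegaN N ^ N = 1 :=
  (omegaN_primitive N).pow_eq_one

lemma eN_add (N : ℕ) [NeZero N] (a b : ZMod N) : eN N (a + b) = eN N a * eN N b := by
  unfold eN
  rw [← pow_add]
  rw [ZMod.val_add]
  conv_rhs => rw [← Nat.mod_add_div (a.val + b.val) N]
  rw [pow_add, pow_mul, omegaN_pow_N, one_pow, mul_one]

lemma eN_zero (N : ℕ) [NeZero N] : eN N 0 = 1 := by
  simp [eN, ZMod.val_zero]

lemma eN_eq_one_iff (N : ℕ) [NeZero N] (a : ZMod N) : eN N a = 1 ↔ a = 0 := by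
  rw [eN, (omegaN_primitive N).pow_eq_one_iff_dvd]
  constructor
  · intro h
    have := (ZMod.natCast_eq_zero_iff a.val N).2 h
    rwa [ZMod.natCast_val, ZMod.cast_id] at this
  · rintro rfl; simp

lemma omegaN_pow_mod (N : ℕ) [NeZero N] (m : ℕ) : omegaN N ^ (m % N) = omegaN N ^ m := by
  conv_rhs => rw [← Nat.mod_add_div m N, pow_add, pow_mul, omegaN_pow_N, one_pow, mul_one]

lemma eN_mul_char (N : ℕ) [NeZero N] (μ d : ZMod N) : eN N (μ * d) = (eN N d) ^ μ.val := by
  rw [eN, eN, ZMod.val_mul, omegaN_pow_mod, ← pow_mul, mul_comm]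

lemma sum_eN_char (N : ℕ) [NeZero N] (d : ZMod N) :
    ∑ μ : ZMod N, eN N (μ * d) = if d = 0 then (N : ℂ) else 0 := by
  simp_rw [eN_mul_char]
  have hs : ∑ μ : ZMod N, (eN N d) ^ μ.val = ∑ k ∈ Finset.range N, (eN N d) ^ k := by
    refine Finset.sum_nbij' (i := fun μ : ZMod N => μ.val) (j := fun k : ℕ => (k : ZMod N))
      ?_ ?_ ?_ ?_ ?_ <;>
      simp [ZMod.val_lt, ZMod.val_cast_of_lt, Finset.mem_range]
    intro a ha; exact Nat.mod_eq_of_lt ha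
  rw [hs]
  by_cases hd : d = 0
  · simp [hd, eN_zero]
  · rw [if_neg hd]
    have h1 : eN N d ≠ 1 := fun h => hd ((eN_eq_one_iff N d).1 h)
    rw [geom_sum_eq h1]
    have : eN N d ^ N = 1 := by
      rw [eN, ← pow_mul, mul_comm, pow_mul, omegaN_pow_N, one_pow]
    rw [this, sub_self, zero_div]

lemma two_mul_eq_zero_iff (N : ℕ) [NeZero N] (hN2 : 2 ∣ N) (d : ZMod N) :
    d + d = 0 ↔ d = 0 ∨ d = ((N / 2 : ℕ) : ZMod N) := by
  obtain ⟨H, hH⟩ := hN2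
  have hNpos : 0 < N := Nat.pos_of_ne_zero (NeZero.ne N)
  have hH2 : N / 2 = H := by omega
  constructor
  · intro h
    have hv : (d.val + d.val) % N = 0 := by
      have := congrArg ZMod.val h
      rwa [ZMod.val_add, ZMod.val_zero] at this
    have hlt : d.val < N := ZMod.val_lt d
    have : d.val = 0 ∨ d.val = H := by
      rcases Nat.lt_or_ge (d.val + d.val) N with h1 | h1
      · left; rw [Nat.mod_eq_of_lt h1] at hv; omega
      · right
        have : d.val + d.val - N < N := by omega
        have h2 : (d.val + d.val) % N = d.val + d.val - N := by
          rw [Nat.mod_eq_sub_mod (by omega)]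
          exact Nat.mod_eq_of_lt this
        omega
    rcases this with h0 | h0
    · left
      have := congrArg (Nat.cast : ℕ → ZMod N) h0
      rw [ZMod.natCast_val, ZMod.cast_id] at this
      simpa using this
    · right
      have := congrArg (Nat.cast : ℕ → ZMod N) h0
      rw [ZMod.natCast_val, ZMod.cast_id] at this
      rw [this, hH2]
  · rintro (rfl | rfl)
    · simp
    · rw [hH2, ← Nat.cast_add, ← two_mul, ← hH, ZMod.natCast_self]

lemma half_ne_zero (N : ℕ) [NeZero N] (hN2 : 2 ∣ N) (hN4 : 4 ≤ N) :
    ((N / 2 : ℕ) : ZMod N) ≠ 0 := by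
  intro h
  have := (ZMod.natCast_eq_zero_iff (N / 2) N).1 h
  have h1 : 0 < N / 2 := by omega
  have h2 : N / 2 < N := by omega
  exact absurd (Nat.le_of_dvd h1 this) (by omega)

lemma val_two_mul_even (N : ℕ) [NeZero N] (hN2 : 2 ∣ N) (μ : ZMod N) :
    2 ∣ (μ + μ).val := by
  rw [ZMod.val_add]
  exact (Nat.dvd_mod_iff hN2).2 ⟨μ.val, by ring⟩

lemma point_sum (N : ℕ) [NeZero N] (y : ZMod N × ZMod N → ℂ) (u v : ZMod N) :
    ∑ n : ZMod N × ZMod N, (if n.1 = u then (N:ℂ) else 0) * (if n.2 = v then (N:ℂ) else 0) * y n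
      = (N:ℂ)^2 * y (u, v) := by
  rw [Fintype.sum_prod_type]
  simp only [ite_mul, mul_ite, mul_zero, zero_mul, Finset.sum_ite_eq', Finset.mem_univ, if_true]
  ring

lemma alias_sum (N : ℕ) [NeZero N] (hN2 : 2 ∣ N) (hN4 : 4 ≤ N)
    (y : ZMod N × ZMod N → ℂ)
    (hF : ∀ ν : ZMod N × ZMod N, 2 ∣ ν.1.val → 2 ∣ ν.2.val →
      ∑ n : ZMod N × ZMod N, eN N (ν.1 * n.1 + ν.2 * n.2) * y n = 0)
    (b : ZMod N × ZMod N) :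
    y b + y (b.1, b.2 + ((N/2:ℕ):ZMod N)) + y (b.1 + ((N/2:ℕ):ZMod N), b.2)
      + y (b.1 + ((N/2:ℕ):ZMod N), b.2 + ((N/2:ℕ):ZMod N)) = 0 := by
  set h : ZMod N := ((N/2:ℕ):ZMod N) with hh
  have hhne : h ≠ 0 := half_ne_zero N hN2 hN4
  have hS0 : ∑ μ : ZMod N × ZMod N,
      eN N (-((μ.1+μ.1) * b.1 + (μ.2+μ.2) * b.2)) *
        (∑ n : ZMod N × ZMod N, eN N ((μ.1+μ.1) * n.1 + (μ.2+μ.2) * n.2) * y n) = 0 := by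
    refine Finset.sum_eq_zero fun μ _ => ?_
    rw [hF ((μ.1+μ.1), (μ.2+μ.2)) (val_two_mul_even N hN2 μ.1) (val_two_mul_even N hN2 μ.2),
      mul_zero]
  have hswap : ∑ μ : ZMod N × ZMod N,
      eN N (-((μ.1+μ.1) * b.1 + (μ.2+μ.2) * b.2)) *
        (∑ n : ZMod N × ZMod N, eN N ((μ.1+μ.1) * n.1 + (μ.2+μ.2) * n.2) * y n)
      = ∑ n : ZMod N × ZMod N,
          (∑ μ1 : ZMod N, eN N (μ1 * ((n.1 - b.1) + (n.1 - b.1)))) *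
          (∑ μ2 : ZMod N, eN N (μ2 * ((n.2 - b.2) + (n.2 - b.2)))) * y n := by
    simp_rw [Finset.mul_sum]
    rw [Finset.sum_comm]
    refine Finset.sum_congr rfl fun n _ => ?_
    have hpt : ∀ μ : ZMod N × ZMod N,
        eN N (-((μ.1+μ.1) * b.1 + (μ.2+μ.2) * b.2)) *
          (eN N ((μ.1+μ.1) * n.1 + (μ.2+μ.2) * n.2) * y n)
        = eN N (μ.1 * ((n.1 - b.1) + (n.1 - b.1))) *
          (eN N (μ.2 * ((n.2 - b.2) + (n.2 - b.2))) * y n) := by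
      intro μ
      rw [← mul_assoc, ← mul_assoc, ← eN_add, ← eN_add]
      congr 2
      ring
    rw [Finset.sum_congr rfl (fun μ _ => hpt μ)]
    rw [Fintype.sum_prod_type]
    simp_rw [← Finset.mul_sum, ← Finset.sum_mul]
    ring
  rw [hswap] at hS0
  have hcond : ∀ (t u : ZMod N),
      (∑ μ1 : ZMod N, eN N (μ1 * ((t - u) + (t - u)))) =
        (if t = u then (N:ℂ) else 0) + (if t = u + h then (N:ℂ) else 0) := by
    intro t u
    rw [sum_eN_char]
    have hiff : ((t - u) + (t - u) = 0) ↔ (t = u ∨ t = u + h) := by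
      rw [two_mul_eq_zero_iff N hN2, sub_eq_zero, sub_eq_iff_eq_add']
    by_cases h1 : t = u
    · rw [if_pos (hiff.2 (Or.inl h1)), if_pos h1, if_neg, add_zero]
      intro hc
      rw [h1, left_eq_add] at hc
      exact hhne hc
    · by_cases h2 : t = u + h
      · rw [if_pos (hiff.2 (Or.inr h2)), if_neg h1, if_pos h2, zero_add]
      · rw [if_neg (fun hc => (hiff.1 hc).elim h1 h2), if_neg h1, if_neg h2, add_zero]
  simp_rw [hcond] at hS0
  have hexp : ∀ n : ZMod N × ZMod N,
      ((if n.1 = b.1 then (N:ℂ) else 0) + (if n.1 = b.1 + h then (N:ℂ) else 0)) *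
        ((if n.2 = b.2 then (N:ℂ) else 0) + (if n.2 = b.2 + h then (N:ℂ) else 0)) * y n
      = (if n.1 = b.1 then (N:ℂ) else 0) * (if n.2 = b.2 then (N:ℂ) else 0) * y n
        + (if n.1 = b.1 then (N:ℂ) else 0) * (if n.2 = b.2 + h then (N:ℂ) else 0) * y n
        + (if n.1 = b.1 + h then (N:ℂ) else 0) * (if n.2 = b.2 then (N:ℂ) else 0) * y n
        + (if n.1 = b.1 + h then (N:ℂ) else 0) * (if n.2 = b.2 + h then (N:ℂ) else 0) * y n :=
    fun n => by ring
  rw [Finset.sum_congr rfl (fun n _ => hexp n), Finset.sum_add_distrib,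
    Finset.sum_add_distrib, Finset.sum_add_distrib, point_sum, point_sum, point_sum,
    point_sum, ← mul_add, ← mul_add, ← mul_add] at hS0
  have hN0 : ((N:ℂ))^2 ≠ 0 := pow_ne_zero 2 (Nat.cast_ne_zero.2 (NeZero.ne N))
  have := (mul_eq_zero.1 hS0).resolve_left hN0
  simpa using this

lemma sum_mulVec' {m n : Type*} [Fintype n] {ι : Type*} (s : Finset ι)
    (M : ι → Matrix m n ℂ) (x : n → ℂ) :
    (∑ j ∈ s, M j) *ᵥ x = ∑ j ∈ s, (M j *ᵥ x) := by
  ext i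
  simp only [Matrix.mulVec, dotProduct, Finset.sum_apply, Finset.sum_mul,
    Matrix.sum_apply]
  rw [Finset.sum_comm]

lemma dotProduct_sum' {ι m : Type*} [Fintype m] (s : Finset ι) (v : m → ℂ) (w : ι → m → ℂ) :
    dotProduct v (∑ j ∈ s, w j) = ∑ j ∈ s, dotProduct v (w j) := by
  simp only [dotProduct, Finset.sum_apply, Finset.mul_sum]
  rw [Finset.sum_comm]

open scoped ComplexOrder in
lemma kernel_step {m : Type*} [Fintype m] [DecidableEq m] {ι : Type*} [Fintype ι]
    (A : ι → Matrix m m ℂ) (x : m → ℂ)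
    (h : (∑ j : ι, (A j)ᴴ * A j) *ᵥ x = 0) (j : ι) : A j *ᵥ x = 0 := by
  have hdot : ∑ j : ι, dotProduct (star ((A j) *ᵥ x)) ((A j) *ᵥ x) = 0 := by
    have h1 : dotProduct (star x) ((∑ j : ι, (A j)ᴴ * A j) *ᵥ x) = 0 := by
      rw [h, dotProduct_zero]
    rw [sum_mulVec', dotProduct_sum'] at h1
    rw [← h1]
    refine Finset.sum_congr rfl fun j _ => ?_
    calc star (A j *ᵥ x) ⬝ᵥ (A j *ᵥ x)
        = (star x ᵥ* (A j)ᴴ) ⬝ᵥ (A j *ᵥ x) := by rw [Matrix.star_mulVec]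
      _ = star x ⬝ᵥ ((A j)ᴴ *ᵥ (A j *ᵥ x)) := (Matrix.dotProduct_mulVec _ _ _).symm
      _ = star x ⬝ᵥ (((A j)ᴴ * A j) *ᵥ x) := by rw [Matrix.mulVec_mulVec]
  have hnn : ∀ j ∈ Finset.univ (α := ι),
      0 ≤ dotProduct (star ((A j) *ᵥ x)) ((A j) *ᵥ x) :=
    fun j _ => dotProduct_star_self_nonneg _
  exact dotProduct_star_self_eq_zero.1
    ((Finset.sum_eq_zero_iff_of_nonneg hnn).1 hdot j (Finset.mem_univ j))

/-- If every second index in both directions is acquired and the N_c×4 aliasing matrices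
G_n built from the sensitivities at the four pixels n + (±N/4, ±N/4) have rank 4 for all
n ∈ Λ_{N/2}, then Σⱼ (B⁽ʲ⁾)*B⁽ʲ⁾ is invertible. -/
theorem stmt12 (N Nc : ℕ) [NeZero N] (hN : 4 ∣ N)
    (s : Fin Nc → ZMod N × ZMod N → ℂ)
    (ΛP : Finset (ZMod N × ZMod N))
    (hΛ : ∀ x : ZMod N × ZMod N, 2 ∣ x.1.val → 2 ∣ x.2.val → x ∈ ΛP)
    (B : Fin Nc → Matrix (ZMod N × ZMod N) (ZMod N × ZMod N) ℂ)
    (hB : ∀ j, B j = Matrix.diagonal (fun i => if i ∈ ΛP then (1 : ℂ) else 0) *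
      dft2 N * Matrix.diagonal (s j))
    (q : ZMod N) (hq : q = ((N / 4 : ℕ) : ZMod N))
    (hrank : ∀ i : Fin (N / 2) × Fin (N / 2),
      ∀ a : Fin 4 → ℂ,
        (∀ j : Fin Nc,
          a 0 * s j ((((i.1 : ℕ) : ZMod N) - q) + q, (((i.2 : ℕ) : ZMod N) - q) + q) +
          a 1 * s j ((((i.1 : ℕ) : ZMod N) - q) + q, (((i.2 : ℕ) : ZMod N) - q) - q) +
          a 2 * s j ((((i.1 : ℕ) : ZMod N) - q) - q, (((i.2 : ℕ) : ZMod N) - q) + q) +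
          a 3 * s j ((((i.1 : ℕ) : ZMod N) - q) - q, (((i.2 : ℕ) : ZMod N) - q) - q) = 0) →
        a = 0) :
    IsUnit (∑ j : Fin Nc, (B j)ᴴ * B j) := by
  have hNpos : 0 < N := Nat.pos_of_ne_zero (NeZero.ne N)
  have hN4 : 4 ≤ N := Nat.le_of_dvd hNpos hN
  have hN2 : 2 ∣ N := dvd_trans ⟨2, rfl⟩ hN
  have hker : ∀ x : ZMod N × ZMod N → ℂ,
      (∑ j : Fin Nc, (B j)ᴴ * B j) *ᵥ x = 0 → x = 0 := by
    intro x hx0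
    have hBx : ∀ j, B j *ᵥ x = 0 := kernel_step B x hx0
    have hFj : ∀ j, ∀ ν : ZMod N × ZMod N, 2 ∣ ν.1.val → 2 ∣ ν.2.val →
        ∑ n : ZMod N × ZMod N, eN N (ν.1 * n.1 + ν.2 * n.2) * (s j n * x n) = 0 := by
      intro j ν h1 h2
      have hmem := hΛ ν h1 h2
      have hv := congrFun (hBx j) ν
      rw [hB j, ← Matrix.mulVec_mulVec, ← Matrix.mulVec_mulVec] at hv
      rw [Matrix.mulVec_diagonal] at hv
      rw [if_pos hmem, one_mul] at hv
      simp only [Pi.zero_apply] at hv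
      rw [← hv]
      simp only [Matrix.mulVec, dotProduct, Matrix.diagonal_apply, ite_mul, zero_mul,
        Finset.sum_ite_eq, Finset.mem_univ, if_true, dft2, Matrix.of_apply]
    funext p
    set hH : ZMod N := ((N / 2 : ℕ) : ZMod N) with hhH
    have hHH : hH + hH = 0 := by
      rw [hhH, ← Nat.cast_add, show N / 2 + N / 2 = N by omega, ZMod.natCast_self]
    have hneg : -hH = hH := neg_eq_of_add_eq_zero_left hHH
    have hqq : q + q = hH := by
      rw [hq, hhH, ← Nat.cast_add]
      congr 1
      omega
    have hN2pos : 0 < N / 2 := by omega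
    set i1 : Fin (N / 2) := ⟨p.1.val % (N / 2), Nat.mod_lt _ hN2pos⟩ with hi1
    set i2 : Fin (N / 2) := ⟨p.2.val % (N / 2), Nat.mod_lt _ hN2pos⟩ with hi2
    set c1 : ZMod N := ((i1 : ℕ) : ZMod N) with hc1
    set c2 : ZMod N := ((i2 : ℕ) : ZMod N) with hc2
    have hp1 : p.1 = c1 ∨ p.1 = c1 + hH := by
      have hd : p.1.val = (i1 : ℕ) + (N / 2) * (p.1.val / (N / 2)) :=
        (Nat.mod_add_div _ _).symm
      have hlt : p.1.val < (N / 2) * 2 := by have := ZMod.val_lt p.1; omega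
      have hk := Nat.le_one_iff_eq_zero_or_eq_one.1
        (Nat.lt_succ_iff.1 (Nat.div_lt_of_lt_mul hlt))
      have hcast : p.1 = ((p.1.val : ℕ) : ZMod N) := by
        rw [ZMod.natCast_val, ZMod.cast_id]
      rcases hk with hk | hk
      · left; rw [hcast, hd, hk]; simp [hc1]
      · right; rw [hcast, hd, hk, mul_one, Nat.cast_add]
    have hp2 : p.2 = c2 ∨ p.2 = c2 + hH := by
      have hd : p.2.val = (i2 : ℕ) + (N / 2) * (p.2.val / (N / 2)) :=
        (Nat.mod_add_div _ _).symm
      have hlt : p.2.val < (N / 2) * 2 := by have := ZMod.val_lt p.2; omega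
      have hk := Nat.le_one_iff_eq_zero_or_eq_one.1
        (Nat.lt_succ_iff.1 (Nat.div_lt_of_lt_mul hlt))
      have hcast : p.2 = ((p.2.val : ℕ) : ZMod N) := by
        rw [ZMod.natCast_val, ZMod.cast_id]
      rcases hk with hk | hk
      · left; rw [hcast, hd, hk]; simp [hc2]
      · right; rw [hcast, hd, hk, mul_one, Nat.cast_add]
    have e00 : c1 - q + q = c1 := by ring
    have e01 : c1 - q - q = c1 + hH := by
      rw [sub_sub, hqq, sub_eq_add_neg, hneg]
    have e10 : c2 - q + q = c2 := by ring
    have e11 : c2 - q - q = c2 + hH := by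
      rw [sub_sub, hqq, sub_eq_add_neg, hneg]
    set a : Fin 4 → ℂ := ![x (c1, c2), x (c1, c2 + hH), x (c1 + hH, c2), x (c1 + hH, c2 + hH)]
      with ha
    have ha0 : a = 0 := by
      apply hrank (i1, i2) a
      intro j
      have hal := alias_sum N hN2 hN4 (fun n => s j n * x n) (hFj j) (c1, c2)
      simp only at hal
      rw [show (((i1, i2).1 : ℕ) : ZMod N) = c1 from rfl,
        show (((i1, i2).2 : ℕ) : ZMod N) = c2 from rfl]
      rw [e00, e01, e10, e11]
      show x (c1, c2) * s j (c1, c2) + x (c1, c2 + hH) * s j (c1, c2 + hH)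
        + x (c1 + hH, c2) * s j (c1 + hH, c2)
        + x (c1 + hH, c2 + hH) * s j (c1 + hH, c2 + hH) = 0
      linear_combination hal
    have hx4 : x (c1, c2) = 0 ∧ x (c1, c2 + hH) = 0 ∧ x (c1 + hH, c2) = 0 ∧
        x (c1 + hH, c2 + hH) = 0 :=
      ⟨congrFun ha0 0, congrFun ha0 1, congrFun ha0 2, congrFun ha0 3⟩
    have hpp : p = (p.1, p.2) := rfl
    rw [Pi.zero_apply]
    rcases hp1 with h1 | h1 <;> rcases hp2 with h2 | h2 <;>
      · rw [hpp, h1, h2]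
        tauto
  rw [← Matrix.mulVec_injective_iff_isUnit]
  intro x1 x2 hx
  have h0 : (∑ j : Fin Nc, (B j)ᴴ * B j) *ᵥ (x1 - x2) = 0 := by
    rw [Matrix.mulVec_sub, hx, sub_self]
  exact sub_eq_zero.1 (hker _ h0)
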